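/- arXiv:2009.12863 — 2 statements merged into one kernel-verified Lean document; each statement's English description precedes it below -/
import Mathlib

section
/- For a unit-norm frame F ∈ C^{J×L}, the sum of squared inner products ∑_{ℓ,ℓ'} |⟨f_ℓ, f_{ℓ'}⟩|² is at least L²/J, with equality if and only if F is a tight frame (i.e., F F^H = (L/J) I_J). -/
/-!
Put `S = F Fᴴ`. The frame potential is the squared Frobenius norm of the Gram matrix `Fᴴ F`,
which equals `‖S‖²` because `tr ((Fᴴ F)²) = tr (S²)`. For any square `J × J` matrix, subtracting
the scalar matrix with the same trace splits the squared Frobenius norm orthogonally: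
`‖S‖² = |tr S|² / J + ‖S - (tr S / J) I‖²`. Unit-norm columns give `tr S = L`, so the potential
is `L² / J` plus a square that vanishes exactly when `S = (L / J) I`.
-/

open Matrix

attribute [local instance] Matrix.frobeniusNormedAddCommGroup

namespace Matrix

variable {𝕜 : Type*} [RCLike 𝕜] {m n : Type*} [Fintype m] [Fintype n]

theorem frobenius_norm_sq (A : Matrix m n 𝕜) : ‖A‖ ^ 2 = ∑ i, ∑ j, ‖A i j‖ ^ 2 := by
  rw [frobenius_norm_def, ← Real.rpow_natCast, ← Real.rpow_mul (by positivity)]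
  norm_num

theorem trace_mul_conjTranspose_self (A : Matrix m n 𝕜) :
    trace (A * Aᴴ) = ((∑ i, ∑ j, ‖A i j‖ ^ 2 : ℝ) : 𝕜) := by
  simp only [trace, diag, mul_apply, conjTranspose_apply, RCLike.star_def, RCLike.mul_conj]
  push_cast
  rfl

theorem frobenius_norm_sq_eq_re_trace (A : Matrix m n 𝕜) :
    ‖A‖ ^ 2 = RCLike.re (trace (A * Aᴴ)) := by
  rw [trace_mul_conjTranspose_self, RCLike.ofReal_re, frobenius_norm_sq]

theorem frobenius_norm_conjTranspose_mul_self (A : Matrix m n 𝕜) : ‖Aᴴ * A‖ = ‖A * Aᴴ‖ := by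
  have hsq : ‖Aᴴ * A‖ ^ 2 = ‖A * Aᴴ‖ ^ 2 := by
    simp only [frobenius_norm_sq_eq_re_trace, conjTranspose_mul, conjTranspose_conjTranspose,
      Matrix.mul_assoc]
    rw [trace_mul_comm]
    simp only [Matrix.mul_assoc]
  exact (pow_left_inj₀ (norm_nonneg _) (norm_nonneg _) two_ne_zero).mp hsq

theorem frobenius_norm_sq_eq_add_sub_smul_one [DecidableEq n] (A : Matrix n n 𝕜) :
    ‖A‖ ^ 2 = ‖trace A‖ ^ 2 / Fintype.card n
      + ‖A - (trace A / Fintype.card n) • (1 : Matrix n n 𝕜)‖ ^ 2 := by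
  set c := trace A / Fintype.card n
  have htrace : trace ((A - c • 1) * (A - c • 1)ᴴ)
      = trace (A * Aᴴ) - trace A * star (trace A) / Fintype.card n := by
    simp only [conjTranspose_sub, conjTranspose_smul, conjTranspose_one, sub_mul, mul_sub,
      trace_sub, Matrix.smul_mul, Matrix.mul_smul, Matrix.one_mul, Matrix.mul_one, trace_smul,
      trace_one, smul_smul, trace_conjTranspose, c, smul_eq_mul, star_div₀, star_natCast]
    rcases eq_or_ne (Fintype.card n : 𝕜) 0 with h | h
    · simp [h]
    · field_simp
      ring
  rw [frobenius_norm_sq_eq_re_trace, frobenius_norm_sq_eq_re_trace, htrace]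
  simp only [RCLike.star_def, RCLike.mul_conj, map_sub]
  rw [← RCLike.ofReal_natCast (K := 𝕜), ← RCLike.ofReal_pow, RCLike.div_re_ofReal,
    RCLike.ofReal_re]
  ring

end Matrix

theorem frame_potential_bound_general (J L : ℕ)
    (F : Matrix (Fin J) (Fin L) ℂ)
    (hnorm : ∀ ℓ : Fin L, ∑ j : Fin J, ‖F j ℓ‖ ^ 2 = 1) :
    ((L : ℝ) ^ 2 / J ≤
      ∑ ℓ : Fin L, ∑ ℓ' : Fin L,
        ‖∑ j : Fin J, (starRingEnd ℂ) (F j ℓ) * F j ℓ'‖ ^ 2) ∧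
    ((∑ ℓ : Fin L, ∑ ℓ' : Fin L,
        ‖∑ j : Fin J, (starRingEnd ℂ) (F j ℓ) * F j ℓ'‖ ^ 2
        = (L : ℝ) ^ 2 / J) ↔
      F * Fᴴ = ((L : ℂ) / (J : ℂ)) • (1 : Matrix (Fin J) (Fin J) ℂ)) := by
  have hgram : ∑ ℓ : Fin L, ∑ ℓ' : Fin L, ‖∑ j : Fin J, (starRingEnd ℂ) (F j ℓ) * F j ℓ'‖ ^ 2
      = ‖Fᴴ * F‖ ^ 2 := by
    simp only [frobenius_norm_sq, mul_apply, conjTranspose_apply, Complex.star_def]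
  have htrace : trace (F * Fᴴ) = L := by
    rw [trace_mul_conjTranspose_self, Finset.sum_comm]
    simp [hnorm]
  have hsplit := frobenius_norm_sq_eq_add_sub_smul_one (F * Fᴴ)
  rw [htrace, Fintype.card_fin, Complex.norm_natCast] at hsplit
  rw [hgram, frobenius_norm_conjTranspose_mul_self, hsplit, add_eq_left, sq_eq_zero_iff,
    norm_eq_zero, sub_eq_zero]
  exact ⟨le_add_of_nonneg_right (sq_nonneg _), Iff.rfl⟩

/-- For a unit-norm frame `F ∈ ℂ^{J×L}`, the sum of squared inner products
`∑_{ℓ,ℓ'} |⟨f_ℓ,f_{ℓ'}⟩|²` is at least `L²/J`, with equality iff `F` is a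
tight frame, i.e. `F Fᴴ = (L/J) I`. -/
theorem frame_potential_bound (J L : ℕ) (hJ : 0 < J) (hJL : J ≤ L)
    (F : Matrix (Fin J) (Fin L) ℂ)
    (hnorm : ∀ ℓ : Fin L, ∑ j : Fin J, ‖F j ℓ‖ ^ 2 = 1) :
    ((L : ℝ) ^ 2 / J ≤
      ∑ ℓ : Fin L, ∑ ℓ' : Fin L,
        ‖∑ j : Fin J, (starRingEnd ℂ) (F j ℓ) * F j ℓ'‖ ^ 2) ∧
    ((∑ ℓ : Fin L, ∑ ℓ' : Fin L,
        ‖∑ j : Fin J, (starRingEnd ℂ) (F j ℓ) * F j ℓ'‖ ^ 2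
        = (L : ℝ) ^ 2 / J) ↔
      F * Fᴴ = ((L : ℂ) / (J : ℂ)) • (1 : Matrix (Fin J) (Fin J) ℂ)) :=
  frame_potential_bound_general J L F hnorm
end

section
/- With the Bernoulli-Gaussian prior p(h) = λ·CN(h; 0, Γ) + (1−λ)·δ(h) and Gaussian likelihood CN(h; μ, Σ) (Γ, Σ diagonal positive definite), the posterior mean of h is ĥ = Γ(Σ + Γ)^{-1} μ / τ, where τ = 1 + ((1−λ)/λ) exp(−μ^H(Σ^{-1} − (Σ+Γ)^{-1})μ + log|Σ^{-1}Γ + I_N|). -/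
open MeasureTheory Finset

/-- Circularly symmetric complex Gaussian density on `ℂ^N` with diagonal
covariance `diag d` and mean `m`. -/
noncomputable def cnDiag (N : ℕ) (d : Fin N → ℝ) (m : Fin N → ℂ) (h : Fin N → ℂ) : ℝ :=
  (Real.pi ^ N * ∏ n, d n)⁻¹ * Real.exp (-(∑ n, ‖h n - m n‖ ^ 2 / d n))

/-! Completing the square coordinatewise gives
`CN(h; μ, Σ) CN(h; 0, Γ) = CN(0; μ, Σ + Γ) · CN(h; Γ(Σ + Γ)⁻¹μ, Σ(Σ + Γ)⁻¹Γ)`,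
so the slab part of the evidence is `λ CN(0; μ, Σ + Γ)` and the slab part of the first moment is
that constant times `Γ(Σ + Γ)⁻¹μ`. The spike adds `(1 - λ) CN(0; μ, Σ)` to the evidence and nothing
to the moment, and `CN(0; μ, Σ) / CN(0; μ, Σ + Γ)` is the exponential in `τ`; hence the evidence is
`λ τ CN(0; μ, Σ + Γ)`. -/

section GaussianIntegrals

open Real

variable {V : Type*} [NormedAddCommGroup V] [InnerProductSpace ℝ V] [FiniteDimensional ℝ V]
  [MeasurableSpace V] [BorelSpace V] {b : ℝ}

theorem integral_rexp_neg_mul_sq_norm_sub (hb : 0 < b) (m : V) :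
    ∫ v : V, rexp (-b * ‖v - m‖ ^ 2) = (π / b) ^ (Module.finrank ℝ V / 2 : ℝ) := by
  rw [integral_sub_right_eq_self (fun v : V => rexp (-b * ‖v‖ ^ 2)) m,
    GaussianFourier.integral_rexp_neg_mul_sq_norm hb]

theorem integrable_rexp_neg_mul_sq_norm_sub (hb : 0 < b) (m : V) :
    Integrable (fun v : V => rexp (-b * ‖v - m‖ ^ 2)) := by
  refine Integrable.of_integral_ne_zero ?_
  rw [integral_rexp_neg_mul_sq_norm_sub hb m]
  exact (rpow_pos_of_pos (div_pos pi_pos hb) _).ne'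

theorem integrable_rexp_neg_mul_sq_norm_smul (hb : 0 < b) :
    Integrable (fun v : V => rexp (-b * ‖v‖ ^ 2) • v) := by
  have hb2 : 0 < b / 2 := by positivity
  refine ((integrable_rexp_neg_mul_sq_norm_sub hb2 0).const_mul (1 + 2 / b)).mono'
    (by fun_prop) (.of_forall fun v => ?_)
  -- `t ≤ (1 + 2/b) (1 + b t²/2) ≤ (1 + 2/b) exp (b t²/2)`
  have hlin : ‖v‖ ≤ (1 + 2 / b) * rexp (b / 2 * ‖v‖ ^ 2) := by
    have hexp := add_one_le_exp (b / 2 * ‖v‖ ^ 2)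
    have hpoly : ‖v‖ ≤ (1 + 2 / b) * (b / 2 * ‖v‖ ^ 2 + 1) := by
      have : (1 + 2 / b) * (b / 2 * ‖v‖ ^ 2 + 1) = 1 + ‖v‖ ^ 2 + b / 2 * ‖v‖ ^ 2 + 2 / b := by
        field_simp; ring
      nlinarith [sq_nonneg (‖v‖ - 1), div_pos two_pos hb]
    exact hpoly.trans (by gcongr)
  have hsplit : rexp (-b * ‖v‖ ^ 2) = rexp (-(b / 2) * ‖v‖ ^ 2) * rexp (-(b / 2) * ‖v‖ ^ 2) := by
    rw [← exp_add]; ring_nf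
  have hdecay : rexp (-(b / 2) * ‖v‖ ^ 2) * ‖v‖ ≤ 1 + 2 / b :=
    calc rexp (-(b / 2) * ‖v‖ ^ 2) * ‖v‖
        ≤ rexp (-(b / 2) * ‖v‖ ^ 2) * ((1 + 2 / b) * rexp (b / 2 * ‖v‖ ^ 2)) := by gcongr
      _ = 1 + 2 / b := by rw [mul_left_comm, ← exp_add]; simp
  rw [norm_smul, norm_of_nonneg (exp_pos _).le, sub_zero, hsplit, mul_assoc, mul_comm (1 + 2 / b)]
  gcongr

theorem integral_rexp_neg_mul_sq_norm_smul (b : ℝ) :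
    ∫ v : V, rexp (-b * ‖v‖ ^ 2) • v = 0 := by
  have hodd := integral_neg_eq_self (fun v : V => rexp (-b * ‖v‖ ^ 2) • v) volume
  simp only [norm_neg, smul_neg, integral_neg] at hodd
  have htwice : (2 : ℝ) • ∫ v : V, rexp (-b * ‖v‖ ^ 2) • v = 0 := by
    rw [two_smul]
    nth_rw 1 [← hodd]
    exact neg_add_cancel _
  exact (smul_eq_zero.mp htwice).resolve_left two_ne_zero

theorem integral_rexp_neg_mul_sq_norm_sub_smul (hb : 0 < b) (m : V) :
    ∫ v : V, rexp (-b * ‖v - m‖ ^ 2) • v = (π / b) ^ (Module.finrank ℝ V / 2 : ℝ) • m := by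
  rw [← integral_add_right_eq_self (fun v : V => rexp (-b * ‖v - m‖ ^ 2) • v) m]
  simp only [add_sub_cancel_right, smul_add]
  have hint : Integrable (fun v : V => rexp (-b * ‖v‖ ^ 2)) := by
    simpa using integrable_rexp_neg_mul_sq_norm_sub hb (0 : V)
  rw [integral_add (integrable_rexp_neg_mul_sq_norm_smul hb) (hint.smul_const m),
    integral_rexp_neg_mul_sq_norm_smul, zero_add, integral_smul_const,
    GaussianFourier.integral_rexp_neg_mul_sq_norm hb]

end GaussianIntegrals

section ComplexGaussian

open Real

noncomputable def cnDensity (d : ℝ) (m z : ℂ) : ℝ :=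
  (π * d)⁻¹ * rexp (-(‖z - m‖ ^ 2 / d))

variable {d : ℝ}

theorem pi_div_inv_rpow_finrank_complex :
    (π / d⁻¹) ^ (Module.finrank ℝ ℂ / 2 : ℝ) = π * d := by
  rw [Complex.finrank_real_complex]
  norm_num [div_inv_eq_mul]

theorem integral_cnDensity (hd : 0 < d) (m : ℂ) : ∫ z, cnDensity d m z = 1 := by
  simp only [cnDensity, div_eq_inv_mul, ← neg_mul]
  rw [integral_const_mul, integral_rexp_neg_mul_sq_norm_sub (inv_pos.mpr hd),
    pi_div_inv_rpow_finrank_complex, inv_mul_cancel₀ (by positivity)]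

theorem integral_cnDensity_smul (hd : 0 < d) (m : ℂ) : ∫ z, cnDensity d m z • z = m := by
  simp only [cnDensity, div_eq_inv_mul, ← neg_mul, mul_smul]
  rw [integral_smul, integral_rexp_neg_mul_sq_norm_sub_smul (inv_pos.mpr hd),
    pi_div_inv_rpow_finrank_complex, smul_smul, inv_mul_cancel₀ (by positivity), one_smul]

theorem cnDensity_mul_cnDensity_zero {s g : ℝ} (hs : 0 < s) (hg : 0 < g) (μ z : ℂ) :
    cnDensity s μ z * cnDensity g 0 z
      = cnDensity (s + g) μ 0 * cnDensity (s * g / (s + g)) (((g / (s + g) : ℝ) : ℂ) * μ) z := by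
  have hsg : 0 < s + g := by linarith
  unfold cnDensity
  rw [mul_mul_mul_comm, ← exp_add, mul_mul_mul_comm, ← exp_add]
  congr 1
  · field_simp
  · rw [← neg_add, ← neg_add]
    congr 1
    simp only [Complex.sq_norm, Complex.normSq_apply, Complex.sub_re, Complex.sub_im,
      Complex.zero_re, Complex.zero_im, Complex.mul_re, Complex.mul_im,
      Complex.ofReal_re, Complex.ofReal_im]
    field_simp
    ring

theorem cnDensity_zero_eq {s g : ℝ} (hs : 0 < s) (hg : 0 < g) (μ : ℂ) :
    cnDensity s μ 0 = cnDensity (s + g) μ 0 *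
      ((g / s + 1) * rexp (-(‖μ‖ ^ 2 * (1 / s - 1 / (s + g))))) := by
  have hsg : 0 < s + g := by linarith
  unfold cnDensity
  rw [mul_assoc, mul_left_comm (rexp _), ← mul_assoc, ← exp_add]
  congr 1
  · field_simp
    ring
  · simp only [zero_sub, norm_neg]
    rw [← neg_add]
    congr 1
    field_simp
    ring

end ComplexGaussian

section DiagonalGaussian

open Real

variable {N : ℕ} {d s g : Fin N → ℝ}

theorem cnDiag_eq_prod (m h : Fin N → ℂ) :
    cnDiag N d m h = ∏ n, cnDensity (d n) (m n) (h n) := by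
  simp only [cnDiag, cnDensity, prod_mul_distrib, prod_inv_distrib, prod_const, card_univ,
    Fintype.card_fin, ← exp_sum, sum_neg_distrib]

theorem cnDiag_pos (hd : ∀ n, 0 < d n) (m h : Fin N → ℂ) : 0 < cnDiag N d m h := by
  unfold cnDiag
  have : 0 < ∏ n, d n := prod_pos fun n _ => hd n
  positivity

theorem integral_cnDiag (hd : ∀ n, 0 < d n) (m : Fin N → ℂ) : ∫ h, cnDiag N d m h = 1 := by
  simp only [cnDiag_eq_prod]
  rw [integral_fintype_prod_volume_eq_prod (f := fun n z => cnDensity (d n) (m n) z)]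
  simp [integral_cnDensity (hd _)]

theorem integral_cnDiag_smul_apply (hd : ∀ n, 0 < d n) (m : Fin N → ℂ) (n : Fin N) :
    ∫ h, cnDiag N d m h • h n = m n := by
  let f : Fin N → ℂ → ℂ := fun k z => (cnDensity (d k) (m k) z : ℂ) * if k = n then z else 1
  have hfactor : ∀ h : Fin N → ℂ, cnDiag N d m h • h n = ∏ k, f k (h k) := by
    intro h
    simp only [f, prod_mul_distrib, prod_ite_eq', mem_univ, if_true, cnDiag_eq_prod,
      Complex.real_smul, Complex.ofReal_prod]
  have hf : ∀ k, ∫ z, f k z = if k = n then m n else 1 := by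
    intro k
    by_cases hk : k = n
    · subst hk
      simpa [f, ← Complex.real_smul] using integral_cnDensity_smul (hd k) (m k)
    · simp only [f, hk, if_false, mul_one]
      rw [integral_complex_ofReal, integral_cnDensity (hd k), Complex.ofReal_one]
  simp only [hfactor]
  rw [integral_fintype_prod_volume_eq_prod f]
  simp [hf]

theorem cnDiag_mul_cnDiag_zero (hs : ∀ n, 0 < s n) (hg : ∀ n, 0 < g n) (μ h : Fin N → ℂ) :
    cnDiag N s μ h * cnDiag N g 0 h = cnDiag N (s + g) μ 0 *
      cnDiag N (fun k => s k * g k / (s k + g k)) (fun k => ((g k / (s k + g k) : ℝ) : ℂ) * μ k) h := by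
  simp only [cnDiag_eq_prod, ← prod_mul_distrib]
  exact prod_congr rfl fun k _ => cnDensity_mul_cnDensity_zero (hs k) (hg k) (μ k) (h k)

theorem cnDiag_zero_eq (hs : ∀ n, 0 < s n) (hg : ∀ n, 0 < g n) (μ : Fin N → ℂ) :
    cnDiag N s μ 0 = cnDiag N (s + g) μ 0 * rexp (-((∑ n, ‖μ n‖ ^ 2 * (1 / s n - 1 / (s n + g n)))
      - log (∏ n, (g n / s n + 1)))) := by
  have hprod : 0 < ∏ n, (g n / s n + 1) := prod_pos fun n _ => by
    have := hs n; have := hg n; positivity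
  rw [neg_sub, exp_sub, exp_log hprod, div_eq_mul_inv, ← exp_neg, ← sum_neg_distrib, exp_sum,
    ← prod_mul_distrib]
  simp only [cnDiag_eq_prod, ← prod_mul_distrib]
  exact prod_congr rfl fun n _ => by simpa using cnDensity_zero_eq (hs n) (hg n) (μ n)

theorem integral_cnDiag_mul_cnDiag_zero (hs : ∀ n, 0 < s n) (hg : ∀ n, 0 < g n) (μ : Fin N → ℂ) :
    ∫ h, cnDiag N s μ h * cnDiag N g 0 h = cnDiag N (s + g) μ 0 := by
  have hd : ∀ k, 0 < s k * g k / (s k + g k) := fun k => by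
    have := hs k; have := hg k; positivity
  simp only [cnDiag_mul_cnDiag_zero hs hg]
  rw [integral_const_mul, integral_cnDiag hd, mul_one]

theorem integral_cnDiag_mul_cnDiag_zero_smul_apply (hs : ∀ n, 0 < s n) (hg : ∀ n, 0 < g n)
    (μ : Fin N → ℂ) (n : Fin N) :
    ∫ h, (cnDiag N s μ h * cnDiag N g 0 h) • h n
      = cnDiag N (s + g) μ 0 • (((g n / (s n + g n) : ℝ) : ℂ) * μ n) := by
  have hd : ∀ k, 0 < s k * g k / (s k + g k) := fun k => by
    have := hs k; have := hg k; positivity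
  simp only [cnDiag_mul_cnDiag_zero hs hg, mul_smul]
  rw [integral_smul, integral_cnDiag_smul_apply hd]

end DiagonalGaussian

theorem bg_posterior_mean_general (N : ℕ) (s g : Fin N → ℝ)
    (hs : ∀ n, 0 < s n) (hg : ∀ n, 0 < g n)
    (lam : ℝ) (hlam0 : 0 < lam) (μv : Fin N → ℂ)
    (τ : ℝ)
    (hτ : τ = 1 + ((1 - lam) / lam) *
        Real.exp (-((∑ n, ‖μv n‖ ^ 2 * (1 / s n - 1 / (s n + g n)))
          - Real.log (∏ n, (g n / s n + 1)))))
    (C : ℝ)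
    (hC : C = lam * (∫ h : Fin N → ℂ, cnDiag N s μv h * cnDiag N g 0 h)
        + (1 - lam) * cnDiag N s μv 0) :
    ∀ n : Fin N,
      (lam / C) • (∫ h : Fin N → ℂ, (cnDiag N s μv h * cnDiag N g 0 h) • h n)
        = ((g n / (s n + g n) / τ : ℝ) : ℂ) * μv n := by
  intro n
  set K := cnDiag N (s + g) μv 0
  have hK : 0 < K := cnDiag_pos (fun k => add_pos (hs k) (hg k)) μv 0
  have hC' : C = τ * (lam * K) := by
    rw [hC, integral_cnDiag_mul_cnDiag_zero hs hg, cnDiag_zero_eq hs hg, hτ]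
    field_simp
    ring
  rw [integral_cnDiag_mul_cnDiag_zero_smul_apply hs hg, smul_smul, hC', div_mul_eq_mul_div,
    div_mul_cancel_right₀ (mul_pos hlam0 hK).ne', Complex.real_smul]
  push_cast
  ring

/-- Posterior mean under the Bernoulli-Gaussian prior `λ·CN(0,Γ)+(1−λ)δ₀` and
Gaussian likelihood `CN(h;μ,Σ)` (diagonal case): `ĥ = Γ(Σ+Γ)⁻¹μ/τ`. -/
theorem bg_posterior_mean (N : ℕ) (s g : Fin N → ℝ)
    (hs : ∀ n, 0 < s n) (hg : ∀ n, 0 < g n)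
    (lam : ℝ) (hlam0 : 0 < lam) (hlam1 : lam < 1) (μv : Fin N → ℂ)
    (τ : ℝ)
    (hτ : τ = 1 + ((1 - lam) / lam) *
        Real.exp (-((∑ n, ‖μv n‖ ^ 2 * (1 / s n - 1 / (s n + g n)))
          - Real.log (∏ n, (g n / s n + 1)))))
    (C : ℝ)
    (hC : C = lam * (∫ h : Fin N → ℂ, cnDiag N s μv h * cnDiag N g 0 h)
        + (1 - lam) * cnDiag N s μv 0) :
    ∀ n : Fin N,
      (lam / C) • (∫ h : Fin N → ℂ, (cnDiag N s μv h * cnDiag N g 0 h) • h n)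
        = ((g n / (s n + g n) / τ : ℝ) : ℂ) * μv n :=
  bg_posterior_mean_general N s g hs hg lam hlam0 μv τ hτ C hC
end
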